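/- Let Φ ⊆ ℝ^{d_φ} be compact, let μ be a probability measure on a compact space Z, let ℓ(z;·): ℝ^{d_φ} → ℝ be C² for every z ∈ Z, let Ω: ℝ^{d_φ} → ℝ be C², and let L(φ) = ∫ ℓ(z;φ) dμ(z) + Ω(φ) be strongly convex with unique minimizer φ*. For a fixed sample z and ε > 0, let φ*_ε denote the minimizer of the perturbed loss L(φ) + ε·ℓ(z;φ). Then the map ε ↦ φ*_ε is differentiable at ε = 0 and its derivative (the influence function) equals −H^{-1} ∇_φ ℓ(z;φ*), where H = ∇²_{φφ} L(φ*) is the Hessian of L at φ*. -/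

import Mathlib

open MeasureTheory
open Set Filter Asymptotics InnerProductSpace Topology

open MeasureTheory
open Set Filter Asymptotics InnerProductSpace Topology

section Aux

variable {E : Type*} [NormedAddCommGroup E] [InnerProductSpace ℝ E] [CompleteSpace E]

lemma aux_strong_gap {m : ℝ} {L : E → ℝ} (hm : 0 < m)
    (hconv : StrongConvexOn Set.univ m L) {x0 : E} (hmin : ∀ φ, L x0 ≤ L φ) (φ : E) :
    L x0 + m / 2 * ‖φ - x0‖ ^ 2 ≤ L φ := by
  set C := m / 2 * ‖φ - x0‖ ^ 2 with hC
  have hC0 : 0 ≤ C := by positivity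
  have key : ∀ a : ℝ, 0 ≤ a → a < 1 → L x0 + a * C ≤ L φ := by
    intro a ha ha1
    have hb : (0:ℝ) < 1 - a := by linarith
    have h2' := hconv.2 (Set.mem_univ x0) (Set.mem_univ φ) ha hb.le (by ring)
    have h2 : L (a • x0 + (1-a) • φ) ≤ a * L x0 + (1-a) * L φ - a * (1-a) * C := by
      simpa [hC, norm_sub_rev x0 φ, smul_eq_mul] using h2'
    have h3 := hmin (a • x0 + (1 - a) • φ)
    by_contra hcon
    push_neg at hcon
    nlinarith [h2, h3, hb]
  refine le_of_forall_pos_le_add fun ε hε => ?_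
  rcases le_or_gt C ε with h | h
  · have := hmin φ; linarith
  · have hCpos : 0 < C := lt_trans hε h
    have ha : (0:ℝ) ≤ 1 - ε / C := by
      have : ε / C ≤ 1 := by rw [div_le_one hCpos]; linarith
      linarith
    have ha1 : 1 - ε / C < 1 := by
      have : 0 < ε / C := div_pos hε hCpos
      linarith
    have hk := key _ ha ha1
    have hexp : (1 - ε / C) * C = C - ε := by field_simp
    rw [hexp] at hk
    linarith

lemma aux_convex_fderiv_le {L : E → ℝ} (hc : ConvexOn ℝ Set.univ L) {x : E}
    {f' : E →L[ℝ] ℝ} (hd : HasFDerivAt L f' x) (y : E) :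
    L x + f' (y - x) ≤ L y := by
  have hq : ConvexOn ℝ Set.univ (L ∘ (AffineMap.lineMap x y : ℝ →ᵃ[ℝ] E)) := by
    simpa using hc.comp_affineMap (AffineMap.lineMap x y : ℝ →ᵃ[ℝ] E)
  have hγ : HasDerivAt (fun t : ℝ => (AffineMap.lineMap x y : ℝ →ᵃ[ℝ] E) t) (y - x) 0 := by
    have h1 : HasDerivAt (fun t : ℝ => t • (y - x) + x) ((1:ℝ) • (y - x)) 0 :=
      ((hasDerivAt_id (0:ℝ)).smul_const (y - x)).add_const x
    rw [one_smul] at h1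
    have heq : (fun t : ℝ => (AffineMap.lineMap x y : ℝ →ᵃ[ℝ] E) t)
        = fun t : ℝ => t • (y - x) + x := by
      funext t
      exact AffineMap.lineMap_apply_module' x y t
    rw [heq]
    exact h1
  have hd' : HasFDerivAt L f' ((AffineMap.lineMap x y : ℝ →ᵃ[ℝ] E) 0) := by
    rwa [AffineMap.lineMap_apply_zero]
  have hcomp : HasDerivAt (L ∘ (AffineMap.lineMap x y : ℝ →ᵃ[ℝ] E)) (f' (y - x)) 0 :=
    hd'.comp_hasDerivAt 0 hγ
  have hs := hq.le_slope_of_hasDerivAt (Set.mem_univ (0:ℝ)) (Set.mem_univ (1:ℝ)) one_pos hcomp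
  rw [slope_def_field] at hs
  simp only [Function.comp_apply, AffineMap.lineMap_apply_zero, AffineMap.lineMap_apply_one,
    sub_zero, div_one] at hs
  linarith

lemma aux_cont {L lz : E → ℝ} {x0 : E} {m δ : ℝ} (hm : 0 < m) (hδ : 0 < δ)
    (φε : ℝ → E)
    (hgap : ∀ φ, L x0 + m / 2 * ‖φ - x0‖ ^ 2 ≤ L φ)
    (hopt : ∀ ε : ℝ, |ε| < δ → ∀ φ, L (φε ε) + ε * lz (φε ε) ≤ L φ + ε * lz φ) :
    ∃ C > 0, ∀ ε : ℝ, 0 ≤ ε → ε ≤ δ / 4 → m / 4 * ‖φε ε - x0‖ ^ 2 ≤ C * ε := by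
  obtain ⟨ε₀, hε₀def⟩ : ∃ e, e = δ / 2 := ⟨_, rfl⟩
  have hε₀pos : 0 < ε₀ := by rw [hε₀def]; positivity
  obtain ⟨Bp, hBp⟩ : ∃ b, b = L (φε ε₀) + ε₀ * lz (φε ε₀) := ⟨_, rfl⟩
  refine ⟨|L x0 - Bp| / ε₀ + |lz x0| + 1, by positivity, ?_⟩
  intro ε hε0 hε4
  have hεδ : |ε| < δ := by rw [abs_of_nonneg hε0]; linarith
  have h1 := hopt ε hεδ x0
  have hgapε := hgap (φε ε)
  have hε₀δ : |ε₀| < δ := by rw [abs_of_pos hε₀pos]; linarith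
  have h2 := hopt ε₀ hε₀δ (φε ε)
  rw [← hBp] at h2
  obtain ⟨t, htdef⟩ : ∃ t, t = ε / ε₀ := ⟨_, rfl⟩
  have ht0 : 0 ≤ t := htdef ▸ div_nonneg hε0 hε₀pos.le
  have ht1 : t ≤ 1/2 := by rw [htdef, div_le_iff₀ hε₀pos]; linarith
  have he1 : t * (Bp - L (φε ε)) ≤ ε * lz (φε ε) := by
    have h3 : Bp - L (φε ε) ≤ ε₀ * lz (φε ε) := by linarith
    have h4 := mul_le_mul_of_nonneg_left h3 ht0
    have h5 : t * (ε₀ * lz (φε ε)) = ε * lz (φε ε) := by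
      rw [htdef]; field_simp
    exact le_of_le_of_eq h4 h5
  obtain ⟨q, hq⟩ : ∃ q, q = m / 2 * ‖φε ε - x0‖ ^ 2 := ⟨_, rfl⟩
  rw [← hq] at hgapε
  have hq0 : 0 ≤ q := by rw [hq]; positivity
  have hkey1 : (1 - t) * (L x0 + q) ≤ (1 - t) * L (φε ε) :=
    mul_le_mul_of_nonneg_left hgapε (by linarith)
  have hmain : (1 - t) * q ≤ t * (L x0 - Bp) + ε * lz x0 := by nlinarith [h1, he1, hkey1]
  have habs1 : t * (L x0 - Bp) ≤ ε * (|L x0 - Bp| / ε₀) := by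
    have h6 := mul_le_mul_of_nonneg_left (le_abs_self (L x0 - Bp)) ht0
    have heq : t * |L x0 - Bp| = ε * (|L x0 - Bp| / ε₀) := by rw [htdef]; ring
    exact le_of_le_of_eq h6 heq
  have habs2 : ε * lz x0 ≤ ε * |lz x0| := mul_le_mul_of_nonneg_left (le_abs_self _) hε0
  have hhalf : q / 2 ≤ (1 - t) * q := by nlinarith [mul_nonneg (show (0:ℝ) ≤ 1/2 - t by linarith) hq0]
  have hfin : m / 4 * ‖φε ε - x0‖ ^ 2 = q / 2 := by rw [hq]; ring
  rw [hfin]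
  calc q / 2 ≤ (1 - t) * q := hhalf
    _ ≤ ε * (|L x0 - Bp| / ε₀) + ε * |lz x0| := hmain.trans (add_le_add habs1 habs2)
    _ ≤ (|L x0 - Bp| / ε₀ + |lz x0| + 1) * ε := by nlinarith [hε0]

end Aux
set_option maxHeartbeats 1600000 in
/-- **Influence function** (Proposition 1 / Koh–Liang).  If `φ*` is the unique minimizer of the
strongly convex loss `L(φ) = ∫ ℓ(z;φ) dμ + Ω(φ)` and `φ*_ε` denotes the minimizer of the loss
perturbed by upweighting the sample `z` with mass `ε`, then `ε ↦ φ*_ε` is differentiable at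
`ε = 0` with derivative `−H⁻¹ ∇ℓ(z; φ*)`, where `H = ∇²L(φ*)`. -/
theorem influence_function_derivative
    {dφ : ℕ} {Z : Type*} [TopologicalSpace Z] [CompactSpace Z] [MeasurableSpace Z]
    (μZ : Measure Z) [IsProbabilityMeasure μZ]
    (Φ : Set (EuclideanSpace ℝ (Fin dφ))) (hΦ : IsCompact Φ)
    (ℓ : Z → EuclideanSpace ℝ (Fin dφ) → ℝ)
    (hℓ : ∀ z, ContDiff ℝ 2 (ℓ z))
    (Ω : EuclideanSpace ℝ (Fin dφ) → ℝ) (hΩ : ContDiff ℝ 2 Ω)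
    (L : EuclideanSpace ℝ (Fin dφ) → ℝ)
    (hLdef : L = fun φ => (∫ z, ℓ z φ ∂μZ) + Ω φ)
    (m : ℝ) (hm : 0 < m) (hconv : StrongConvexOn Set.univ m L)
    (φstar : EuclideanSpace ℝ (Fin dφ))
    (hmin : ∀ φ, L φstar ≤ L φ)
    (z : Z)
    (φε : ℝ → EuclideanSpace ℝ (Fin dφ))
    (hφε0 : φε 0 = φstar)
    (hφε : ∃ δ > 0, ∀ ε : ℝ, |ε| < δ → ∀ φ,
      L (φε ε) + ε * ℓ z (φε ε) ≤ L φ + ε * ℓ z φ)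
    (H : EuclideanSpace ℝ (Fin dφ) ≃L[ℝ] EuclideanSpace ℝ (Fin dφ))
    (hH : (H : EuclideanSpace ℝ (Fin dφ) →L[ℝ] EuclideanSpace ℝ (Fin dφ)) =
      fderiv ℝ (gradient L) φstar) :
    HasDerivAt φε (-(H.symm (gradient (ℓ z) φstar))) 0 := by
  classical
  by_cases hsub : Subsingleton (EuclideanSpace ℝ (Fin dφ))
  · rw [hasDerivAt_iff_isLittleO]
    have hzero : (fun ε : ℝ => φε ε - φε 0 - (ε - 0) • (-(H.symm (gradient (ℓ z) φstar))))
        = fun _ => 0 := funext fun ε => Subsingleton.elim _ _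
    rw [hzero]
    exact isLittleO_zero _ _
  haveI : Nontrivial (EuclideanSpace ℝ (Fin dφ)) := not_subsingleton_iff_nontrivial.mp hsub
  obtain ⟨δ, hδ, hopt⟩ := hφε
  set gl := gradient (ℓ z) with hgl_def
  set g := gradient L with hg_def
  set v := -(H.symm (gl φstar)) with hv_def
  set H' : EuclideanSpace ℝ (Fin dφ) →L[ℝ] EuclideanSpace ℝ (Fin dφ)
    := (H : EuclideanSpace ℝ (Fin dφ) →L[ℝ] EuclideanSpace ℝ (Fin dφ)) with hH'_def
  -- basic facts
  have hconvOn : ConvexOn ℝ Set.univ L := hconv.convexOn (fun r => by positivity)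
  have hldiff : Differentiable ℝ (ℓ z) := (hℓ z).differentiable (by norm_num)
  have hgap : ∀ φ, L φstar + m / 2 * ‖φ - φstar‖ ^ 2 ≤ L φ :=
    aux_strong_gap hm hconv hmin
  -- antilipschitz-type bound
  have hK : ∀ u : EuclideanSpace ℝ (Fin dφ),
      ‖u‖ ≤ ‖(H.symm : EuclideanSpace ℝ (Fin dφ) →L[ℝ] EuclideanSpace ℝ (Fin dφ))‖ * ‖H' u‖ := by
    intro u
    calc ‖u‖ = ‖(H.symm : EuclideanSpace ℝ (Fin dφ) →L[ℝ] EuclideanSpace ℝ (Fin dφ)) (H' u)‖ := by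
          simp [hH'_def]
      _ ≤ _ := ContinuousLinearMap.le_opNorm _ _
  obtain ⟨K, hKdef⟩ : ∃ k, k = ‖(H.symm : EuclideanSpace ℝ (Fin dφ) →L[ℝ] EuclideanSpace ℝ (Fin dφ))‖
    := ⟨_, rfl⟩
  rw [← hKdef] at hK
  have hKpos : 0 < K := by
    obtain ⟨u, hu⟩ := exists_ne (0 : EuclideanSpace ℝ (Fin dφ))
    have h1 := hK u
    have h2 : 0 < ‖u‖ := norm_pos_iff.mpr hu
    nlinarith [norm_nonneg (H' u)]
  -- gradient of L vanishes at the minimizer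
  have hg0 : g φstar = 0 := by
    by_cases hdL : DifferentiableAt ℝ L φstar
    · have hloc : IsLocalMin L φstar := Filter.Eventually.of_forall hmin
      have hz := hloc.fderiv_eq_zero
      rw [hg_def, gradient, hz, map_zero]
    · rw [hg_def]; exact gradient_eq_zero_of_not_differentiableAt hdL
  -- g is differentiable at φstar with derivative H'
  have hgH : HasFDerivAt g H' φstar := by
    by_cases hdg : DifferentiableAt ℝ g φstar
    · have h1 := hdg.hasFDerivAt
      rwa [← hH] at h1
    · exfalso
      have h0 : H' = 0 := by
        rw [hH, fderiv_zero_of_not_differentiableAt hdg]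
      obtain ⟨u, hu⟩ := exists_ne (0 : EuclideanSpace ℝ (Fin dφ))
      apply hu
      have h2 : H u = 0 := by
        have h3 : H' u = 0 := by rw [h0]; rfl
        simpa [hH'_def] using h3
      calc u = H.symm (H u) := (H.symm_apply_apply u).symm
        _ = 0 := by rw [h2, map_zero]
  -- little-o control of g near φstar
  have hlittle : ∀ c > (0:ℝ), ∃ r > (0:ℝ), ∀ x : EuclideanSpace ℝ (Fin dφ),
      ‖x - φstar‖ < r → ‖g x - H' (x - φstar)‖ ≤ c * ‖x - φstar‖ := by
    intro c hc
    have h1 := hgH.isLittleO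
    have h2 := (Asymptotics.isLittleO_iff.mp h1) hc
    rw [Metric.eventually_nhds_iff] at h2
    obtain ⟨r, hr, h3⟩ := h2
    refine ⟨r, hr, fun x hx => ?_⟩
    have h4 := h3 (show dist x φstar < r by rwa [dist_eq_norm])
    simpa [hg0, Real.norm_eq_abs] using h4
  obtain ⟨r₁, hr₁, hr1⟩ := hlittle (1/(2*K)) (by positivity)
  obtain ⟨C₁, hC₁def⟩ : ∃ c, c = ‖H'‖ + 1/(2*K) := ⟨_, rfl⟩
  have hC1 : (0:ℝ) < C₁ := by
    rw [hC₁def]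
    have := norm_nonneg H'
    positivity
  have hgub : ∀ x, ‖x - φstar‖ < r₁ → ‖g x‖ ≤ C₁ * ‖x - φstar‖ := by
    intro x hx
    have h1 := hr1 x hx
    have h2 : ‖H' (x - φstar)‖ ≤ ‖H'‖ * ‖x - φstar‖ := ContinuousLinearMap.le_opNorm _ _
    calc ‖g x‖ = ‖(g x - H' (x - φstar)) + H' (x - φstar)‖ := by rw [sub_add_cancel]
      _ ≤ ‖g x - H' (x - φstar)‖ + ‖H' (x - φstar)‖ := norm_add_le _ _
      _ ≤ 1/(2*K) * ‖x - φstar‖ + ‖H'‖ * ‖x - φstar‖ := add_le_add h1 h2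
      _ = C₁ * ‖x - φstar‖ := by rw [hC₁def]; ring
  have hdiffpunct : ∀ x, ‖x - φstar‖ < r₁ → x ≠ φstar → DifferentiableAt ℝ L x := by
    intro x hx hne
    by_contra hnd
    have h0 : g x = 0 := by rw [hg_def]; exact gradient_eq_zero_of_not_differentiableAt hnd
    have h1 := hr1 x hx
    rw [h0] at h1
    have h3 : ‖H' (x - φstar)‖ ≤ 1/(2*K) * ‖x - φstar‖ := by
      rw [← norm_neg (H' (x - φstar)), ← zero_sub]; exact h1
    have h2 := hK (x - φstar)
    have h4 : (0:ℝ) < ‖x - φstar‖ := norm_pos_iff.mpr (sub_ne_zero.mpr hne)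
    have h5 : K * ‖H' (x - φstar)‖ ≤ K * (1/(2*K) * ‖x - φstar‖) :=
      mul_le_mul_of_nonneg_left h3 hKpos.le
    have h6 : K * (1/(2*K) * ‖x - φstar‖) = ‖x - φstar‖ / 2 := by field_simp
    rw [h6] at h5
    linarith
  have hLub : ∀ x, ‖x - φstar‖ < r₁ → L x ≤ L φstar + C₁ * ‖x - φstar‖ ^ 2 := by
    intro x hx
    rcases eq_or_ne x φstar with rfl | hne
    · simp
    have hdx := hdiffpunct x hx hne
    have h1 := aux_convex_fderiv_le hconvOn hdx.hasFDerivAt φstar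
    have h2 : |(fderiv ℝ L x) (φstar - x)| ≤ ‖g x‖ * ‖x - φstar‖ := by
      have h2a := ContinuousLinearMap.le_opNorm (fderiv ℝ L x) (φstar - x)
      have hnorm : ‖fderiv ℝ L x‖ = ‖g x‖ := by
        rw [hg_def, gradient]
        exact ((InnerProductSpace.toDual ℝ _).symm.norm_map _).symm
      rw [hnorm, norm_sub_rev] at h2a
      calc |(fderiv ℝ L x) (φstar - x)| = ‖(fderiv ℝ L x) (φstar - x)‖ :=
            (Real.norm_eq_abs _).symm
        _ ≤ ‖g x‖ * ‖x - φstar‖ := h2a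
    have h3 := hgub x hx
    have h5 : -((fderiv ℝ L x) (φstar - x)) ≤ ‖g x‖ * ‖x - φstar‖ :=
      (neg_le_abs _).trans h2
    have h6 : ‖g x‖ * ‖x - φstar‖ ≤ C₁ * ‖x - φstar‖ * ‖x - φstar‖ :=
      mul_le_mul_of_nonneg_right h3 (norm_nonneg _)
    have h7 : C₁ * ‖x - φstar‖ * ‖x - φstar‖ = C₁ * ‖x - φstar‖ ^ 2 := by ring
    linarith
  have hdL0 : DifferentiableAt ℝ L φstar := by
    have hfd : HasFDerivAt L (0 : EuclideanSpace ℝ (Fin dφ) →L[ℝ] ℝ) φstar := by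
      rw [hasFDerivAt_iff_isLittleO_nhds_zero, Asymptotics.isLittleO_iff]
      intro c hc
      rw [Metric.eventually_nhds_iff]
      refine ⟨min r₁ (c/C₁), lt_min hr₁ (div_pos hc hC1), fun y hy => ?_⟩
      rw [dist_eq_norm, sub_zero] at hy
      have hsubeq : φstar + y - φstar = y := by abel
      have hy1 : ‖φstar + y - φstar‖ < r₁ := by
        rw [hsubeq]; exact lt_of_lt_of_le hy (min_le_left _ _)
      have hy2 : ‖y‖ ≤ c / C₁ := le_of_lt (lt_of_lt_of_le hy (min_le_right _ _))
      have h7 : C₁ * ‖y‖ ≤ c := by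
        have := (le_div_iff₀ hC1).mp hy2
        linarith
      have h8 := mul_le_mul_of_nonneg_right h7 (norm_nonneg y)
      have h9 := hLub (φstar + y) hy1
      rw [hsubeq] at h9
      simp only [ContinuousLinearMap.zero_apply, sub_zero, Real.norm_eq_abs]
      calc |L (φstar + y) - L φstar| = L (φstar + y) - L φstar :=
            abs_of_nonneg (by linarith [hmin (φstar + y)])
        _ ≤ C₁ * ‖y‖ ^ 2 := by linarith
        _ = C₁ * ‖y‖ * ‖y‖ := by ring
        _ ≤ c * ‖y‖ := h8
    exact hfd.differentiableAt
  have hdiffL : ∀ x, ‖x - φstar‖ < r₁ → DifferentiableAt ℝ L x := fun x hx =>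
    (eq_or_ne x φstar).elim (fun h => h ▸ hdL0) (hdiffpunct x hx)
  -- first-order optimality
  have hkey : ∀ ε : ℝ, |ε| < δ → ‖φε ε - φstar‖ < r₁ →
      g (φε ε) = -(ε • gl (φε ε)) := by
    intro ε hε hde
    have hdl := hdiffL _ hde
    have hfd : HasFDerivAt (fun φ => L φ + ε * ℓ z φ)
        (fderiv ℝ L (φε ε) + ε • fderiv ℝ (ℓ z) (φε ε)) (φε ε) :=
      hdl.hasFDerivAt.add ((hldiff (φε ε)).hasFDerivAt.const_mul ε)
    have hloc : IsLocalMin (fun φ => L φ + ε * ℓ z φ) (φε ε) :=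
      Filter.Eventually.of_forall (fun φ => hopt ε hε φ)
    have h0 := hloc.hasFDerivAt_eq_zero hfd
    have h1 : fderiv ℝ L (φε ε) = -(ε • fderiv ℝ (ℓ z) (φε ε)) :=
      eq_neg_of_add_eq_zero_left h0
    rw [hg_def, hgl_def, gradient, gradient, h1, map_neg]
    congr 1
    simp [map_smulₛₗ]
  -- continuity of the gradient of ℓ z
  have hcont : ∀ c > (0:ℝ), ∃ r > (0:ℝ), ∀ x, ‖x - φstar‖ < r → ‖gl x - gl φstar‖ ≤ c := by
    intro c hc
    have hgc : Continuous gl := by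
      have heq : gl = fun x => (InnerProductSpace.toDual ℝ
          (EuclideanSpace ℝ (Fin dφ))).symm (fderiv ℝ (ℓ z) x) := by
        rw [hgl_def]; rfl
      rw [heq]
      exact (InnerProductSpace.toDual ℝ _).symm.continuous.comp
        ((hℓ z).continuous_fderiv (by norm_num))
    have h1 := hgc.continuousAt (x := φstar)
    rw [Metric.continuousAt_iff] at h1
    obtain ⟨r, hr, h2⟩ := h1 c hc
    refine ⟨r, hr, fun x hx => ?_⟩
    have h3 := h2 (show dist x φstar < r by rwa [dist_eq_norm])
    rw [dist_eq_norm] at h3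
    exact h3.le
  -- continuity of ε ↦ φε ε via strong convexity
  obtain ⟨Cp, hCp, hp⟩ := aux_cont hm hδ φε hgap hopt
  have hopt' : ∀ ε : ℝ, |ε| < δ → ∀ φ,
      L (φε (-ε)) + ε * (-(ℓ z (φε (-ε)))) ≤ L φ + ε * (-(ℓ z φ)) := by
    intro ε hε φ
    have := hopt (-ε) (by rwa [abs_neg]) φ
    simpa [mul_neg, neg_mul] using this
  obtain ⟨Cm, hCm, hmb⟩ := aux_cont (lz := fun φ => -(ℓ z φ)) hm hδ (fun ε => φε (-ε)) hgap hopt'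
  have hsmall : ∀ r > (0:ℝ), ∃ η > (0:ℝ), ∀ ε : ℝ, |ε| < η → ‖φε ε - φstar‖ < r := by
    intro r hr
    obtain ⟨C, hCdef⟩ : ∃ c, c = max Cp Cm := ⟨_, rfl⟩
    have hC : 0 < C := hCdef ▸ lt_of_lt_of_le hCp (le_max_left _ _)
    refine ⟨min (δ/4) (m/4 * r^2 / C), lt_min (by positivity) (by positivity), fun ε hε => ?_⟩
    have h4 : |ε| ≤ δ/4 := le_of_lt (lt_of_lt_of_le hε (min_le_left _ _))
    have hq : m/4 * ‖φε ε - φstar‖^2 ≤ C * |ε| := by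
      rcases le_total 0 ε with h | h
      · have h5 := hp ε h (by rwa [abs_of_nonneg h] at h4)
        have h6 : Cp * ε ≤ C * |ε| := by
          rw [abs_of_nonneg h, hCdef]
          exact mul_le_mul_of_nonneg_right (le_max_left _ _) h
        linarith
      · have h5 := hmb (-ε) (by linarith) (by rw [abs_of_nonpos h] at h4; linarith)
        simp only [neg_neg] at h5
        have h6 : Cm * (-ε) ≤ C * |ε| := by
          rw [abs_of_nonpos h, hCdef]
          exact mul_le_mul_of_nonneg_right (le_max_right _ _) (by linarith)
        linarith
    have h5 : C * |ε| < m/4 * r^2 := by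
      have h6 := lt_of_lt_of_le hε (min_le_right _ _)
      have h7 : C * |ε| < C * (m/4 * r^2 / C) := mul_lt_mul_of_pos_left h6 hC
      have h8 : C * (m/4 * r^2 / C) = m/4 * r^2 := by field_simp
      linarith
    have h6 : ‖φε ε - φstar‖^2 < r^2 := by nlinarith
    exact lt_of_pow_lt_pow_left₀ 2 hr.le h6
  -- the main little-o estimate
  rw [hasDerivAt_iff_isLittleO, Asymptotics.isLittleO_iff]
  intro c hc
  obtain ⟨G, hGdef⟩ : ∃ g, g = ‖gl φstar‖ + 1 := ⟨_, rfl⟩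
  have hGpos : 0 < G := by rw [hGdef]; positivity
  obtain ⟨Cd, hCddef⟩ : ∃ c, c = 2*K*G := ⟨_, rfl⟩
  have hCdpos : 0 < Cd := by rw [hCddef]; positivity
  obtain ⟨c₃, hc₃def⟩ : ∃ x, x = c/(2*K) := ⟨_, rfl⟩
  have hc₃pos : 0 < c₃ := by rw [hc₃def]; positivity
  obtain ⟨c₄, hc₄def⟩ : ∃ x, x = min (1/(2*K)) (c/(2*K*(Cd+1))) := ⟨_, rfl⟩
  have hc₄pos : 0 < c₄ := by
    rw [hc₄def]
    exact lt_min (by positivity) (by positivity)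
  obtain ⟨r₄, hr₄, hR4⟩ := hlittle c₄ hc₄pos
  obtain ⟨r₃, hr₃, hR3⟩ := hcont (min c₃ 1) (lt_min hc₃pos one_pos)
  obtain ⟨η, hη, hsm⟩ := hsmall (min r₁ (min r₃ r₄)) (lt_min hr₁ (lt_min hr₃ hr₄))
  rw [Metric.eventually_nhds_iff]
  refine ⟨min η δ, lt_min hη hδ, fun ε hεd => ?_⟩
  rw [Real.dist_eq, sub_zero] at hεd
  have hεη : |ε| < η := lt_of_lt_of_le hεd (min_le_left _ _)
  have hεδ2 : |ε| < δ := lt_of_lt_of_le hεd (min_le_right _ _)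
  have hdr := hsm ε hεη
  have hdr1 : ‖φε ε - φstar‖ < r₁ := lt_of_lt_of_le hdr (min_le_left _ _)
  have hdr3 : ‖φε ε - φstar‖ < r₃ :=
    lt_of_lt_of_le hdr ((min_le_right _ _).trans (min_le_left _ _))
  have hdr4 : ‖φε ε - φstar‖ < r₄ :=
    lt_of_lt_of_le hdr ((min_le_right _ _).trans (min_le_right _ _))
  rw [hφε0]
  simp only [sub_zero]
  set d := φε ε - φstar with hd_def
  have hk := hkey ε hεδ2 hdr1
  have he := hR4 (φε ε) hdr4
  have hgl3 := hR3 (φε ε) hdr3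
  have hglG : ‖gl (φε ε)‖ ≤ G := by
    have h1 := norm_sub_norm_le (gl (φε ε)) (gl φstar)
    have h2 : ‖gl (φε ε) - gl φstar‖ ≤ 1 := hgl3.trans (min_le_right _ _)
    rw [hGdef]; linarith
  have hgnorm : ‖g (φε ε)‖ = |ε| * ‖gl (φε ε)‖ := by
    rw [hk, norm_neg, norm_smul, Real.norm_eq_abs]
  have hHd : ‖H' d‖ ≤ |ε| * ‖gl (φε ε)‖ + c₄ * ‖d‖ := by
    calc ‖H' d‖ = ‖g (φε ε) - (g (φε ε) - H' d)‖ := by rw [sub_sub_cancel]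
      _ ≤ ‖g (φε ε)‖ + ‖g (φε ε) - H' d‖ := norm_sub_le _ _
      _ ≤ |ε| * ‖gl (φε ε)‖ + c₄ * ‖d‖ := by rw [hgnorm]; exact add_le_add le_rfl he
  have hc₄K : K * c₄ ≤ 1/2 := by
    have h1 : c₄ ≤ 1/(2*K) := hc₄def ▸ min_le_left _ _
    have h2 : K * c₄ ≤ K * (1/(2*K)) := mul_le_mul_of_nonneg_left h1 hKpos.le
    have h3 : K * (1/(2*K)) = 1/2 := by field_simp
    linarith
  have hdCd : ‖d‖ ≤ Cd * |ε| := by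
    have h7 : ‖d‖ ≤ K * (|ε| * ‖gl (φε ε)‖ + c₄ * ‖d‖) :=
      (hK d).trans (mul_le_mul_of_nonneg_left hHd hKpos.le)
    have h8 : K * (|ε| * ‖gl (φε ε)‖) ≤ K * (|ε| * G) :=
      mul_le_mul_of_nonneg_left (mul_le_mul_of_nonneg_left hglG (abs_nonneg ε)) hKpos.le
    have h9 : K * c₄ * ‖d‖ ≤ 1/2 * ‖d‖ := mul_le_mul_of_nonneg_right hc₄K (norm_nonneg d)
    have h10 : Cd * |ε| = 2 * (K * (|ε| * G)) := by rw [hCddef]; ring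
    nlinarith [h7, h8, h9]
  have h9 : H' v = -(gl φstar) := by
    rw [hv_def, hH'_def]
    simp
  have hexp : H' (d - ε • v) = -(ε • (gl (φε ε) - gl φstar)) - (g (φε ε) - H' d) := by
    rw [map_sub, ContinuousLinearMap.map_smul, h9, hk]
    simp only [smul_sub, smul_neg]
    abel
  have hnorm2 : ‖H' (d - ε • v)‖ ≤ |ε| * c₃ + c₄ * ‖d‖ := by
    rw [hexp]
    calc ‖-(ε • (gl (φε ε) - gl φstar)) - (g (φε ε) - H' d)‖
        ≤ ‖-(ε • (gl (φε ε) - gl φstar))‖ + ‖g (φε ε) - H' d‖ := norm_sub_le _ _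
      _ = ‖ε • (gl (φε ε) - gl φstar)‖ + ‖g (φε ε) - H' d‖ := by rw [norm_neg]
      _ ≤ |ε| * c₃ + c₄ * ‖d‖ := by
          rw [norm_smul, Real.norm_eq_abs]
          exact add_le_add
            (mul_le_mul_of_nonneg_left (hgl3.trans (min_le_left _ _)) (abs_nonneg ε)) he
  have hfin : ‖d - ε • v‖ ≤ c * |ε| := by
    have h10 := (hK (d - ε • v)).trans (mul_le_mul_of_nonneg_left hnorm2 hKpos.le)
    have h11 : K * c₃ = c/2 := by rw [hc₃def]; field_simp
    have h12 : K * (c₄ * ‖d‖) ≤ K * (c₄ * (Cd * |ε|)) :=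
      mul_le_mul_of_nonneg_left (mul_le_mul_of_nonneg_left hdCd hc₄pos.le) hKpos.le
    have h14 : K * (c₄ * Cd) ≤ c/2 := by
      have hc₄2 : c₄ ≤ c/(2*K*(Cd+1)) := hc₄def ▸ min_le_right _ _
      have h15 : K * (c₄ * Cd) ≤ K * (c/(2*K*(Cd+1)) * Cd) :=
        mul_le_mul_of_nonneg_left (mul_le_mul_of_nonneg_right hc₄2 hCdpos.le) hKpos.le
      have h16 : K * (c/(2*K*(Cd+1)) * Cd) = c * (Cd/(Cd+1)) / 2 := by
        field_simp
      have h17 : Cd/(Cd+1) ≤ 1 := by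
        rw [div_le_one (by positivity)]; linarith
      have h18 : c * (Cd/(Cd+1)) / 2 ≤ c/2 := by nlinarith [hc.le]
      linarith
    have h13 : K * (c₄ * (Cd * |ε|)) ≤ c/2 * |ε| := by
      have : K * (c₄ * (Cd * |ε|)) = (K * (c₄ * Cd)) * |ε| := by ring
      rw [this]
      exact mul_le_mul_of_nonneg_right h14 (abs_nonneg ε)
    calc ‖d - ε • v‖ ≤ K * (|ε| * c₃ + c₄ * ‖d‖) := h10
      _ = K * c₃ * |ε| + K * (c₄ * ‖d‖) := by ring
      _ ≤ c/2 * |ε| + c/2 * |ε| := by rw [h11]; linarith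
      _ = c * |ε| := by ring
  rw [Real.norm_eq_abs]
  exact hfin
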